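/- arXiv:2511.23233 — 2 statements merged into one kernel-verified Lean document; each statement's English description precedes it below -/
import Mathlib

section
/- Let H be a real Hilbert space, λ ∈ ℝ, and let Φ : H → (−∞,+∞] be proper, λ-convex, and lower semicontinuous. Then the operator ∂^λΦ is (−λ)-m-accretive on H. -/
open scoped RealInnerProductSpace

/-- An operator `A ⊆ X × X` on a real normed space is *accretive* if for all
`(x,y), (x̂,ŷ) ∈ A` and all `λ > 0`, `‖x − x̂ + λ(y − ŷ)‖ ≥ ‖x − x̂‖`. -/
def Accretive {X : Type*} [NormedAddCommGroup X] [NormedSpace ℝ X] (A : Set (X × X)) : Prop :=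
  ∀ p ∈ A, ∀ q ∈ A, ∀ c : ℝ, 0 < c → ‖p.1 - q.1‖ ≤ ‖p.1 - q.1 + c • (p.2 - q.2)‖

/-- The identity operator `I_X = {(x,x) | x ∈ X}`. -/
def idOp (X : Type*) : Set (X × X) := {p | p.2 = p.1}

/-- Sum of operators: `A + B = {(x, y+z) | (x,y) ∈ A, (x,z) ∈ B}`. -/
def opAdd {X : Type*} [Add X] (A B : Set (X × X)) : Set (X × X) :=
  {p | ∃ y z, (p.1, y) ∈ A ∧ (p.1, z) ∈ B ∧ p.2 = y + z}

/-- Scalar multiple of an operator: `λA = {(x, λy) | (x,y) ∈ A}`. -/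
def opSMul {X : Type*} [SMul ℝ X] (c : ℝ) (A : Set (X × X)) : Set (X × X) :=
  {p | ∃ y, (p.1, y) ∈ A ∧ p.2 = c • y}

/-- The range of an operator. -/
def opRange {X : Type*} (A : Set (X × X)) : Set X := {y | ∃ x, (x, y) ∈ A}

/-- An operator is *m-accretive* if it is accretive and `Range(I_X + λA) = X` for all `λ > 0`. -/
def MAccretive {X : Type*} [NormedAddCommGroup X] [NormedSpace ℝ X] (A : Set (X × X)) : Prop :=
  Accretive A ∧ ∀ c : ℝ, 0 < c → opRange (opAdd (idOp X) (opSMul c A)) = Set.univ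

/-- An operator `A` is *ω-m-accretive* if `A + ωI_X` is m-accretive. -/
def OmegaMAccretive {X : Type*} [NormedAddCommGroup X] [NormedSpace ℝ X]
    (ω : ℝ) (A : Set (X × X)) : Prop :=
  MAccretive (opAdd A (opSMul ω (idOp X)))

/-- The subdifferential of `Φ : H → (−∞,+∞]`:
`∂Φ = {(x,y) | ∀ h, Φ(x+h) ≥ Φ(x) + ⟨y,h⟩}`. -/
def subdiff {H : Type*} [NormedAddCommGroup H] [InnerProductSpace ℝ H]
    (Φ : H → EReal) : Set (H × H) :=
  {p | ∀ h : H, Φ p.1 + ((⟪p.2, h⟫ : ℝ) : EReal) ≤ Φ (p.1 + h)}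

/-- The adjusted subdifferential `∂^λΦ := ∂(Φ − (λ/2)‖·‖²) + λ I_H`. -/
def subdiffL {H : Type*} [NormedAddCommGroup H] [InnerProductSpace ℝ H]
    (l : ℝ) (Φ : H → EReal) : Set (H × H) :=
  opAdd (subdiff (fun x => Φ x - (((l / 2) * ‖x‖ ^ 2 : ℝ) : EReal))) (opSMul l (idOp H))

/-- `Φ` is `λ`-convex: `Φ(tx + (1−t)y) ≤ tΦ(x) + (1−t)Φ(y) − (λ/2)t(1−t)‖x−y‖²`. -/
def LambdaConvex {H : Type*} [NormedAddCommGroup H] [NormedSpace ℝ H]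
    (l : ℝ) (Φ : H → EReal) : Prop :=
  ∀ x y : H, ∀ t : ℝ, t ∈ Set.Icc (0 : ℝ) 1 →
    Φ (t • x + (1 - t) • y) ≤
      (t : EReal) * Φ x + ((1 - t : ℝ) : EReal) * Φ y
        - (((l / 2) * t * (1 - t) * ‖x - y‖ ^ 2 : ℝ) : EReal)

/-!
Put `Ψ := Φ - (λ/2)‖·‖²`. It is a proper, lower semicontinuous convex function, and
`∂^λΦ + (-λ)I = ∂Ψ`. The subdifferential of a proper function is monotone, hence accretive in
a Hilbert space. To solve `x + c y = w` with `y ∈ ∂Ψ x`, minimise the `c⁻¹`-convex function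
`Ψ + (c⁻¹/2)‖· - w‖²`: strong convexity bounds it below and makes minimising sequences Cauchy, so
completeness and lower semicontinuity give a minimiser `x`, and comparing with points on
segments from `x` shows `c⁻¹ (w - x) ∈ ∂Ψ x`.
-/

open Set Filter Topology

theorem le_of_forall_mem_Ioc_le_add_mul {a b K : ℝ} (h : ∀ t ∈ Ioc (0 : ℝ) 1, a ≤ b + t * K) :
    a ≤ b := by
  have hlim : Tendsto (fun t : ℝ => b + t * K) (𝓝[>] 0) (𝓝 b) :=
    tendsto_nhdsWithin_of_tendsto_nhds <| by
      simpa using ((continuous_mul_const K).tendsto 0).const_add b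
  exact ge_of_tendsto hlim (eventually_of_mem (Ioc_mem_nhdsGT zero_lt_one) h)

section LambdaConvex

variable {H : Type*} [NormedAddCommGroup H] [InnerProductSpace ℝ H] {l μ : ℝ} {Φ : H → EReal}

theorem LambdaConvex.le_coe (hΦ : LambdaConvex l Φ) {x y : H} {a b t : ℝ}
    (hx : Φ x = a) (hy : Φ y = b) (ht : t ∈ Icc (0 : ℝ) 1) :
    Φ (t • x + (1 - t) • y) ≤
      ((t * a + (1 - t) * b - l / 2 * t * (1 - t) * ‖x - y‖ ^ 2 : ℝ) : EReal) := by
  have := hΦ x y t ht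
  rw [hx, hy] at this
  exact this.trans_eq (by norm_cast)

theorem lambdaConvex_of_le_coe (hbot : ∀ x, Φ x ≠ ⊥)
    (h : ∀ (x y : H) (a b t : ℝ), Φ x = a → Φ y = b → t ∈ Ioo (0 : ℝ) 1 →
      Φ (t • x + (1 - t) • y) ≤
        ((t * a + (1 - t) * b - l / 2 * t * (1 - t) * ‖x - y‖ ^ 2 : ℝ) : EReal)) :
    LambdaConvex l Φ := by
  intro x y t ht
  rcases eq_or_lt_of_le ht.1 with rfl | ht0
  · simp
  rcases eq_or_lt_of_le ht.2 with rfl | ht1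
  · simp
  have hpos : (0 : ℝ) < 1 - t := sub_pos.2 ht1
  by_cases hx : Φ x = ⊤
  · rw [hx, EReal.coe_mul_top_of_pos ht0, EReal.top_add_of_ne_bot, EReal.top_sub_coe]
    · exact le_top
    · exact (EReal.mul_ne_bot _ _).2 ⟨.inl (EReal.coe_ne_bot _), .inr (hbot y),
        .inl (EReal.coe_ne_top _), .inl (by exact_mod_cast hpos.le)⟩
  by_cases hy : Φ y = ⊤
  · rw [hy, EReal.coe_mul_top_of_pos hpos, EReal.add_top_of_ne_bot, EReal.top_sub_coe]
    · exact le_top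
    · exact (EReal.mul_ne_bot _ _).2 ⟨.inl (EReal.coe_ne_bot _), .inr (hbot x),
        .inl (EReal.coe_ne_top _), .inl (by exact_mod_cast ht0.le)⟩
  lift Φ x to ℝ using ⟨hx, hbot x⟩ with a ha
  lift Φ y to ℝ using ⟨hy, hbot y⟩ with b hb
  exact (h x y a b t ha.symm hb.symm ⟨ht0, ht1⟩).trans_eq (by norm_cast)

theorem lambdaConvex_sq_norm_sub (μ : ℝ) (w : H) :
    LambdaConvex μ (fun x => ((μ / 2 * ‖x - w‖ ^ 2 : ℝ) : EReal)) := by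
  intro x y t _
  rw [← EReal.coe_mul, ← EReal.coe_mul, ← EReal.coe_add, ← EReal.coe_sub, EReal.coe_le_coe_iff]
  have hcomb : t • x + (1 - t) • y - w = t • (x - w) + (1 - t) • (y - w) := by module
  have hxy : x - y = (x - w) - (y - w) := by abel
  rw [hcomb, hxy]
  apply le_of_eq
  simp only [← real_inner_self_eq_norm_sq, inner_add_left, inner_add_right, inner_sub_left,
    inner_sub_right, real_inner_smul_left, real_inner_smul_right, real_inner_comm (x - w)]
  ring

theorem LambdaConvex.add_coe (hΦ : LambdaConvex l Φ) (hbot : ∀ x, Φ x ≠ ⊥) {g : H → ℝ}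
    (hg : LambdaConvex μ (fun x => (g x : EReal))) :
    LambdaConvex (l + μ) (fun x => Φ x + g x) := by
  have hval : ∀ {x} {a : ℝ}, Φ x + g x = (a : EReal) → Φ x = ((a - g x : ℝ) : EReal) := by
    intro x a h
    rw [EReal.coe_sub, ← h, EReal.add_sub_cancel_right]
  refine lambdaConvex_of_le_coe (fun x => EReal.add_ne_bot_iff.2 ⟨hbot x, EReal.coe_ne_bot _⟩)
    fun x y a b t hx hy ht => ?_
  have hΦt := hΦ.le_coe (hval hx) (hval hy) (Ioo_subset_Icc_self ht)
  have hgt := hg.le_coe (x := x) (y := y) rfl rfl (Ioo_subset_Icc_self ht)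
  exact (add_le_add hΦt hgt).trans_eq (by norm_cast; ring)

end LambdaConvex

theorem LowerSemicontinuous.add_coe {X : Type*} [TopologicalSpace X] {f : X → EReal}
    {g : X → ℝ} (hf : LowerSemicontinuous f) (hg : Continuous g) :
    LowerSemicontinuous fun x => f x + g x :=
  hf.add' (continuous_coe_real_ereal.comp hg).lowerSemicontinuous fun _ =>
    EReal.continuousAt_add (.inr (EReal.coe_ne_bot _)) (.inr (EReal.coe_ne_top _))

theorem opAdd_opSMul_idOp_cancel {X : Type*} [AddCommGroup X] [Module ℝ X] (l : ℝ)
    (A : Set (X × X)) : opAdd (opAdd A (opSMul l (idOp X))) (opSMul (-l) (idOp X)) = A := by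
  ext ⟨x, v⟩
  constructor
  · rintro ⟨y, z, ⟨u, s, hu, ⟨x₁, hx₁, hs⟩, hy⟩, ⟨x₂, hx₂, hz⟩, hv⟩
    simp only [idOp, mem_ofPred_eq] at hx₁ hx₂ hs hy hz hv
    convert hu using 2
    rw [hv, hy, hz, hs, hx₁, hx₂]
    module
  · intro hv
    exact ⟨v + l • x, (-l) • x, ⟨v, l • x, hv, ⟨x, rfl, rfl⟩, rfl⟩, ⟨x, rfl, rfl⟩, by module⟩

section Subdiff

variable {H : Type*} [NormedAddCommGroup H] [InnerProductSpace ℝ H]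

theorem accretive_of_inner_nonneg {A : Set (H × H)}
    (hA : ∀ p ∈ A, ∀ q ∈ A, 0 ≤ ⟪p.2 - q.2, p.1 - q.1⟫) : Accretive A := by
  intro p hp q hq c hc
  have hinner := mul_nonneg hc.le (hA p hp q hq)
  refine (sq_le_sq₀ (norm_nonneg _) (norm_nonneg _)).1 ?_
  rw [norm_add_sq_real, real_inner_smul_right, real_inner_comm]
  nlinarith [sq_nonneg ‖c • (p.2 - q.2)‖]

variable {Ψ : H → EReal}

theorem ne_top_of_mem_subdiff {p : H × H} (hp : p ∈ subdiff Ψ) {x₀ : H} (hx₀ : Ψ x₀ ≠ ⊤) :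
    Ψ p.1 ≠ ⊤ := by
  intro htop
  have := hp (x₀ - p.1)
  rw [htop, EReal.top_add_coe, add_sub_cancel, top_le_iff] at this
  exact hx₀ this

theorem inner_nonneg_of_mem_subdiff (hbot : ∀ x, Ψ x ≠ ⊥) (hproper : ∃ x, Ψ x ≠ ⊤)
    {p q : H × H} (hp : p ∈ subdiff Ψ) (hq : q ∈ subdiff Ψ) :
    0 ≤ ⟪p.2 - q.2, p.1 - q.1⟫ := by
  obtain ⟨x₀, hx₀⟩ := hproper
  have hpq := hp (q.1 - p.1)
  have hqp := hq (p.1 - q.1)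
  rw [add_sub_cancel] at hpq hqp
  lift Ψ p.1 to ℝ using ⟨ne_top_of_mem_subdiff hp hx₀, hbot _⟩ with a
  lift Ψ q.1 to ℝ using ⟨ne_top_of_mem_subdiff hq hx₀, hbot _⟩ with b
  norm_cast at hpq hqp
  rw [← neg_sub p.1, inner_neg_right] at hpq
  rw [inner_sub_left]
  linarith

end Subdiff

section Minimizer

variable {H : Type*} [NormedAddCommGroup H] [InnerProductSpace ℝ H] {α : ℝ} {G : H → EReal}

theorem LambdaConvex.exists_coe_le (hG : LambdaConvex α G) (hα : 0 < α)
    (hbot : ∀ x, G x ≠ ⊥) (hlsc : LowerSemicontinuous G) (hproper : ∃ x, G x ≠ ⊤) :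
    ∃ M : ℝ, ∀ z, (M : EReal) ≤ G z := by
  obtain ⟨x₀, hx₀⟩ := hproper
  lift G x₀ to ℝ using ⟨hx₀, hbot x₀⟩ with r hr
  obtain ⟨δ, hδ, hball⟩ := Metric.eventually_nhds_iff.1
    (hlsc x₀ ((r - 1 : ℝ) : EReal) (by
      show _ < G x₀; rw [← hr, EReal.coe_lt_coe_iff]; linarith))
  refine ⟨r - 1 - 4 / (α * δ ^ 2), fun z => ?_⟩
  by_cases hz : G z = ⊤
  · simp [hz]
  lift G z to ℝ using ⟨hz, hbot z⟩ with a ha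
  rw [EReal.coe_le_coe_iff]
  by_cases hnear : dist z x₀ < δ
  · have := hball hnear
    rw [← ha, gt_iff_lt, EReal.coe_lt_coe_iff] at this
    have : 0 ≤ 4 / (α * δ ^ 2) := by positivity
    linarith
  -- Far from `x₀`, compare with the point at distance `δ / 2` from `x₀` on the segment to `z`.
  set R := ‖z - x₀‖
  have hR : δ ≤ R := by rwa [not_lt, dist_eq_norm] at hnear
  have hR0 : 0 < R := hδ.trans_le hR
  set t := δ / (2 * R)
  have ht : 0 < t := by positivity
  have htR : t * R = δ / 2 := by simp only [t]; field_simp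
  have ht2 : t ≤ 1 / 2 := by
    rw [div_le_iff₀ (by positivity)]; linarith
  have hdist : dist (t • z + (1 - t) • x₀) x₀ < δ := by
    rw [dist_eq_norm, show t • z + (1 - t) • x₀ - x₀ = t • (z - x₀) by module, norm_smul,
      Real.norm_of_nonneg ht.le, htR]
    linarith
  have hlow := hball hdist
  have hup := hG.le_coe ha.symm hr.symm ⟨ht.le, by linarith⟩
  have key : r - 1 < t * a + (1 - t) * r - α / 2 * t * (1 - t) * R ^ 2 := by
    exact_mod_cast hlow.trans_le hup
  have hgain : -1 + α / 4 * t * R ^ 2 < t * (a - r) := by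
    nlinarith [mul_nonneg (by positivity : 0 ≤ α * t * R ^ 2) (by linarith : 0 ≤ 1 / 2 - t)]
  set u := α * δ * R
  have hu : 0 < u := by positivity
  have hslack : 0 ≤ -1 + α / 4 * t * R ^ 2 + t * (4 / (α * δ ^ 2)) := by
    have : -1 + α / 4 * t * R ^ 2 + t * (4 / (α * δ ^ 2)) = (u - 4) ^ 2 / (8 * u) := by
      simp only [t, u]; field_simp; ring
    rw [this]; positivity
  nlinarith

theorem LambdaConvex.norm_sub_sq_le_of_le_coe (hG : LambdaConvex α G) {m ε ε' : ℝ}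
    (hm : ∀ y, (m : EReal) ≤ G y) {z z' : H} (hz : G z ≤ ((m + ε : ℝ) : EReal))
    (hz' : G z' ≤ ((m + ε' : ℝ) : EReal)) :
    α / 8 * ‖z - z'‖ ^ 2 ≤ (ε + ε') / 2 := by
  have hmid := hm ((1 / 2 : ℝ) • z + (1 - 1 / 2 : ℝ) • z')
  lift G z to ℝ using ⟨ne_top_of_le_ne_top (EReal.coe_ne_top _) hz,
    ne_bot_of_le_ne_bot (EReal.coe_ne_bot m) (hm z)⟩ with a ha
  lift G z' to ℝ using ⟨ne_top_of_le_ne_top (EReal.coe_ne_top _) hz',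
    ne_bot_of_le_ne_bot (EReal.coe_ne_bot m) (hm z')⟩ with b hb
  have hup := hG.le_coe ha.symm hb.symm (t := 1 / 2) ⟨by norm_num, by norm_num⟩
  have hreal := EReal.coe_le_coe_iff.1 (hmid.trans hup)
  rw [EReal.coe_le_coe_iff] at hz hz'
  linarith

theorem LambdaConvex.exists_forall_le [CompleteSpace H] (hG : LambdaConvex α G) (hα : 0 < α)
    (hbot : ∀ x, G x ≠ ⊥) (hlsc : LowerSemicontinuous G) (hproper : ∃ x, G x ≠ ⊤) :
    ∃ x, ∀ y, G x ≤ G y := by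
  obtain ⟨M, hM⟩ := hG.exists_coe_le hα hbot hlsc hproper
  obtain ⟨x₀, hx₀⟩ := hproper
  obtain ⟨m, hm⟩ : ∃ m : ℝ, (m : EReal) = ⨅ y, G y :=
    ⟨_, EReal.coe_toReal (ne_top_of_le_ne_top hx₀ (iInf_le _ _)) (ne_bot_of_le_ne_bot
      (EReal.coe_ne_bot M) (le_iInf hM))⟩
  have hle : ∀ y, (m : EReal) ≤ G y := fun y => hm ▸ iInf_le _ y
  have hε : Tendsto (fun n : ℕ => 1 / ((n : ℝ) + 1)) atTop (𝓝 0) :=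
    tendsto_one_div_add_atTop_nhds_zero_nat
  have hseq : ∀ n : ℕ, ∃ z, G z ≤ ((m + 1 / (n + 1) : ℝ) : EReal) := fun n => by
    have : ⨅ y, G y < ((m + 1 / (n + 1) : ℝ) : EReal) := by
      rw [← hm, EReal.coe_lt_coe_iff]; linarith [Nat.one_div_pos_of_nat (α := ℝ) (n := n)]
    obtain ⟨z, hz⟩ := iInf_lt_iff.1 this
    exact ⟨z, hz.le⟩
  choose z hz using hseq
  have hzN : ∀ N n : ℕ, N ≤ n → G (z n) ≤ ((m + 1 / (N + 1) : ℝ) : EReal) := fun N n hn =>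
    (hz n).trans (EReal.coe_le_coe_iff.2 (by gcongr))
  have hcauchy : CauchySeq z := by
    refine cauchySeq_of_le_tendsto_0 (fun N : ℕ => √(8 / α * (1 / (N + 1))))
      (fun n k N hn hk => ?_) (by simpa using (hε.const_mul (8 / α)).sqrt)
    have := hG.norm_sub_sq_le_of_le_coe hle (hzN N n hn) (hzN N k hk)
    rw [Real.le_sqrt dist_nonneg (by positivity), dist_eq_norm, div_mul_eq_mul_div,
      le_div_iff₀ hα]
    linarith
  obtain ⟨x, hx⟩ := cauchySeq_tendsto_of_complete hcauchy
  have hxN : ∀ N : ℕ, G x ≤ ((m + 1 / (N + 1) : ℝ) : EReal) := fun N =>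
    (hlsc.isClosed_preimage _).mem_of_tendsto hx (eventually_atTop.2 ⟨N, hzN N⟩)
  have hlim : Tendsto (fun N : ℕ => ((m + 1 / (N + 1) : ℝ) : EReal)) atTop (𝓝 m) := by
    have := hε.const_add m
    rw [add_zero] at this
    exact (continuous_coe_real_ereal.tendsto m).comp this
  exact ⟨x, fun y => (ge_of_tendsto' hlim hxN).trans (hle y)⟩

end Minimizer

section Resolvent

variable {H : Type*} [NormedAddCommGroup H] [InnerProductSpace ℝ H] {Ψ : H → EReal}

theorem prox_mem_subdiff (hΨ : LambdaConvex 0 Ψ) (hbot : ∀ x, Ψ x ≠ ⊥) {c : ℝ} {w x : H}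
    (hx : Ψ x ≠ ⊤) (hmin : ∀ z, Ψ x + ((c⁻¹ / 2 * ‖x - w‖ ^ 2 : ℝ) : EReal) ≤
      Ψ z + ((c⁻¹ / 2 * ‖z - w‖ ^ 2 : ℝ) : EReal)) :
    (x, c⁻¹ • (w - x)) ∈ subdiff Ψ := by
  intro h
  by_cases hxh : Ψ (x + h) = ⊤
  · simp [hxh]
  lift Ψ x to ℝ using ⟨hx, hbot x⟩ with a ha
  lift Ψ (x + h) to ℝ using ⟨hxh, hbot _⟩ with b hb
  rw [← EReal.coe_add, EReal.coe_le_coe_iff]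
  refine le_of_forall_mem_Ioc_le_add_mul (K := c⁻¹ / 2 * ‖h‖ ^ 2) fun t ht => ?_
  have hconv := hΨ.le_coe hb.symm ha.symm (Ioc_subset_Icc_self ht)
  rw [show t • (x + h) + (1 - t) • x = x + t • h by module] at hconv
  have hreal := EReal.coe_le_coe_iff.1 <| (hmin (x + t • h)).trans (add_le_add hconv le_rfl)
  rw [show x + t • h - w = (x - w) + t • h by abel, norm_add_sq_real, real_inner_smul_right,
    norm_smul, Real.norm_of_nonneg ht.1.le] at hreal
  have hinner : ⟪c⁻¹ • (w - x), h⟫ = -(c⁻¹ * ⟪x - w, h⟫) := by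
    rw [real_inner_smul_left, ← neg_sub x w, inner_neg_left, mul_neg]
  suffices t * (a + ⟪c⁻¹ • (w - x), h⟫) ≤ t * (b + t * (c⁻¹ / 2 * ‖h‖ ^ 2)) from
    le_of_mul_le_mul_left this ht.1
  rw [hinner]
  nlinarith

theorem opRange_idOp_add_smul_subdiff [CompleteSpace H] (hΨ : LambdaConvex 0 Ψ)
    (hbot : ∀ x, Ψ x ≠ ⊥) (hproper : ∃ x, Ψ x ≠ ⊤) (hlsc : LowerSemicontinuous Ψ) {c : ℝ}
    (hc : 0 < c) : opRange (opAdd (idOp H) (opSMul c (subdiff Ψ))) = univ := by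
  refine eq_univ_of_forall fun w => ?_
  have hG := hΨ.add_coe hbot (lambdaConvex_sq_norm_sub c⁻¹ w)
  rw [zero_add] at hG
  have hGbot : ∀ z, Ψ z + ((c⁻¹ / 2 * ‖z - w‖ ^ 2 : ℝ) : EReal) ≠ ⊥ := fun z =>
    EReal.add_ne_bot_iff.2 ⟨hbot z, EReal.coe_ne_bot _⟩
  obtain ⟨x₀, hx₀⟩ := hproper
  obtain ⟨x, hx⟩ := hG.exists_forall_le (inv_pos.2 hc) hGbot
    (hlsc.add_coe (by fun_prop)) ⟨x₀, EReal.add_ne_top hx₀ (EReal.coe_ne_top _)⟩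
  have hxtop : Ψ x ≠ ⊤ := fun htop => by
    have := hx x₀
    rw [htop, EReal.top_add_coe, top_le_iff] at this
    exact EReal.add_ne_top hx₀ (EReal.coe_ne_top _) this
  refine ⟨x, x, c • c⁻¹ • (w - x), rfl, ⟨_, prox_mem_subdiff hΨ hbot hxtop hx, rfl⟩, ?_⟩
  rw [smul_inv_smul₀ hc.ne', add_sub_cancel]

end Resolvent

/-- If `Φ : H → (−∞,+∞]` is proper, `λ`-convex and lower semicontinuous on a
real Hilbert space `H`, then `∂^λΦ` is `(−λ)`-m-accretive on `H`. -/
theorem subdiffL_omegaMAccretive {H : Type*} [NormedAddCommGroup H]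
    [InnerProductSpace ℝ H] [CompleteSpace H] (l : ℝ) (Φ : H → EReal)
    (hbot : ∀ x, Φ x ≠ ⊥) (hproper : ∃ x, Φ x ≠ ⊤)
    (hconv : LambdaConvex l Φ) (hlsc : LowerSemicontinuous Φ) :
    OmegaMAccretive (-l) (subdiffL l Φ) := by
  set Ψ : H → EReal := fun x => Φ x - (((l / 2) * ‖x‖ ^ 2 : ℝ) : EReal)
  have hΨ : Ψ = fun x => Φ x + ((-l / 2 * ‖x - 0‖ ^ 2 : ℝ) : EReal) := by
    ext x
    simp [Ψ, sub_eq_add_neg, neg_div]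
  have hΨbot : ∀ x, Ψ x ≠ ⊥ := fun x => by
    rw [hΨ]; exact EReal.add_ne_bot_iff.2 ⟨hbot x, EReal.coe_ne_bot _⟩
  have hΨproper : ∃ x, Ψ x ≠ ⊤ := by
    obtain ⟨x₀, hx₀⟩ := hproper
    exact ⟨x₀, by rw [hΨ]; exact EReal.add_ne_top hx₀ (EReal.coe_ne_top _)⟩
  have hΨconv : LambdaConvex 0 Ψ := by
    rw [hΨ, ← add_neg_cancel l]; exact hconv.add_coe hbot (lambdaConvex_sq_norm_sub (-l) 0)
  have hΨlsc : LowerSemicontinuous Ψ := by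
    rw [hΨ]; exact hlsc.add_coe (by fun_prop)
  rw [OmegaMAccretive, subdiffL, opAdd_opSMul_idOp_cancel]
  exact ⟨accretive_of_inner_nonneg fun p hp q hq =>
      inner_nonneg_of_mem_subdiff hΨbot hΨproper hp hq,
    fun c hc => opRange_idOp_add_smul_subdiff hΨconv hΨbot hΨproper hΨlsc hc⟩
end

section
/- Let n ∈ ℕ, let A : Fin n × Fin n → ℝ satisfy A_{ij} ≥ 0 for all i, j, and let L : ℝ → [0,+∞) be convex. Define Φ(u) := ∑_{i,j} A_{ij} L(u_i − u_j) for u : Fin n → ℝ. Then for all u, v : Fin n → ℝ and all g ∈ P₀ (with compositions taken componentwise), Φ(u + g∘(v−u)) + Φ(v − g∘(v−u)) ≤ Φ(u) + Φ(v). -/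
/-- The class `P₀` of smooth functions `g : ℝ → ℝ` with `0 ∉ supp(g)`, `supp(g′)` compact and
`0 ≤ g′ ≤ 1`. -/
def P0 : Set (ℝ → ℝ) :=
  {g | ContDiff ℝ (⊤ : ℕ∞) g ∧ (0 : ℝ) ∉ tsupport g ∧ HasCompactSupport (deriv g) ∧
    ∀ s : ℝ, deriv g s ∈ Set.Icc (0 : ℝ) 1}

/-- The graph energy `Φ(u) = ∑_{i,j} A_{ij} L(u_i − u_j)`. -/
def graphEnergy {n : ℕ} (A : Fin n → Fin n → ℝ) (L : ℝ → ℝ) (u : Fin n → ℝ) : ℝ :=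
  ∑ i : Fin n, ∑ j : Fin n, A i j * L (u i - u j)

lemma convex_pair_le {L : ℝ → ℝ} (hL : ConvexOn ℝ Set.univ L) {a b c : ℝ}
    (hc : c ∈ segment ℝ a b) : L c + L (a + b - c) ≤ L a + L b := by
  obtain ⟨α, β, hα, hβ, hαβ, rfl⟩ := hc
  have h1 : L (α • a + β • b) ≤ α * L a + β * L b :=
    hL.2 (Set.mem_univ a) (Set.mem_univ b) hα hβ hαβ
  have h2 : a + b - (α • a + β • b) = β • a + α • b := by
    simp only [smul_eq_mul]; linear_combination (-(a + b)) * hαβ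
  rw [h2]
  have h3 : L (β • a + α • b) ≤ β * L a + α * L b :=
    hL.2 (Set.mem_univ a) (Set.mem_univ b) hβ hα (by linarith)
  have h4 : α * L a + β * L b + (β * L a + α * L b) = L a + L b := by
    linear_combination (L a + L b) * hαβ
  linarith

/-- For nonnegative weights `A` and convex `L : ℝ → [0,∞)`, the graph energy
`Φ(u) = ∑_{i,j} A_{ij} L(u_i − u_j)` satisfies the `P₀`-convexity inequality
`Φ(u + g∘(v−u)) + Φ(v − g∘(v−u)) ≤ Φ(u) + Φ(v)`. -/
theorem graphEnergy_P0Convex {n : ℕ} (A : Fin n → Fin n → ℝ)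
    (hA : ∀ i j, 0 ≤ A i j) (L : ℝ → ℝ) (hL : ConvexOn ℝ Set.univ L)
    (hL0 : ∀ s, 0 ≤ L s) (u v : Fin n → ℝ) (g : ℝ → ℝ) (hg : g ∈ P0) :
    graphEnergy A L (fun i => u i + g (v i - u i)) +
      graphEnergy A L (fun i => v i - g (v i - u i)) ≤
    graphEnergy A L u + graphEnergy A L v := by
  obtain ⟨hsm, -, -, hder⟩ := hg
  have hdiff : Differentiable ℝ g := hsm.differentiable (by simp)
  have gmono : Monotone g :=
    monotone_of_deriv_nonneg hdiff fun s => (hder s).1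
  have hmono : Monotone (fun x : ℝ => x - g x) := by
    apply monotone_of_deriv_nonneg (differentiable_id.sub hdiff)
    intro s
    have h := (hasDerivAt_id s).sub (hdiff s).hasDerivAt
    rw [h.deriv]
    linarith [(hder s).2]
  -- key pairwise inequality
  have key : ∀ i j : Fin n,
      A i j * L ((u i + g (v i - u i)) - (u j + g (v j - u j))) +
        A i j * L ((v i - g (v i - u i)) - (v j - g (v j - u j))) ≤
      A i j * L (u i - u j) + A i j * L (v i - v j) := by
    intro i j
    set x := v i - u i
    set y := v j - u j
    set a := u i - u j
    set b := v i - v j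
    have hd : (u i + g x) - (u j + g y) = a + (g x - g y) := by ring
    have hd2 : (v i - g x) - (v j - g y) = a + b - (a + (g x - g y)) := by ring
    rw [hd, hd2]
    have hc : a + (g x - g y) ∈ segment ℝ a b := by
      rw [segment_eq_uIcc, Set.mem_uIcc]
      have hba : b - a = x - y := by simp only [x, y, a, b]; ring
      rcases le_total y x with h | h
      · left
        constructor
        · have := gmono h; linarith
        · have := hmono h; simp only at this; linarith
      · right
        constructor
        · have := hmono h; simp only at this; linarith
        · have := gmono h; linarith
    have := convex_pair_le hL hc
    nlinarith [hA i j]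
  simp only [graphEnergy, ← Finset.sum_add_distrib]
  exact Finset.sum_le_sum fun i _ => Finset.sum_le_sum fun j _ => key i j
end
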